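/- arXiv:1605.02165 — 4 statements merged into one kernel-verified Lean document; each statement's English description precedes it below -/
import Mathlib

section
/- Let α ∈ (0,1), β > 0, and let a, b ≥ 0 satisfy a ≥ 2b·cosh(βπ/2)·√(1 + tan²(απ/2)·tanh²(βπ/2)). Then Re φ_{a,b}(iω) ≥ 1 for every ω > 0. In particular, under the thermodynamical restrictions (T3₁) and (T3₂), Re P(iω) ≥ 1 and Re Q(iω) ≥ 1 for all ω > 0. -/
/-!
On the imaginary axis `(iω)^(x+iy) = ω^x e^{-yπ/2} e^{i(xπ/2 + y log ω)}`, so with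
`A = απ/2`, `B = βπ/2`, `t = β log ω`,
`Re φ_{a,b}(iω) = 1 + ω^α (a cos A + 2b (cosh B cos A · cos t + sinh B sin A · sin t))`.
The oscillating part `c cos t + d sin t` is at least `-√(c² + d²)`, and for `cos A > 0`
one has `√(c² + d²) = Ctan α β · cos A`; hence the bracket is at least
`cos A · (a - 2b Ctan α β) ≥ 0`.
-/

/-- `φ_{a,b}(s) = 1 + a·s^α + b·(s^{α+iβ} + s^{α−iβ})`, with principal complex powers. -/
noncomputable def phi (α β a b : ℝ) (s : ℂ) : ℂ :=
  1 + (a : ℂ) * s ^ (α : ℂ) +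
    (b : ℂ) * (s ^ ((α : ℂ) + Complex.I * (β : ℂ)) + s ^ ((α : ℂ) - Complex.I * (β : ℂ)))

/-- The constant `cosh(βπ/2)·√(1 + tan²(απ/2)·tanh²(βπ/2))` appearing in restrictions (T3). -/
noncomputable def Ctan (α β : ℝ) : ℝ :=
  Real.cosh (β * (Real.pi / 2)) *
    Real.sqrt (1 + (Real.tan (α * (Real.pi / 2)) * Real.tanh (β * (Real.pi / 2))) ^ 2)

open Real

lemma Complex.log_I_mul_ofReal {ω : ℝ} (hω : 0 < ω) :
    Complex.log (Complex.I * ω) = Real.log ω + (π / 2 : ℝ) * Complex.I := by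
  rw [Complex.log_mul_ofReal ω hω _ Complex.I_ne_zero, Complex.log_I]
  push_cast
  ring

lemma Complex.re_I_mul_ofReal_cpow {ω : ℝ} (hω : 0 < ω) (x y : ℝ) :
    ((Complex.I * ω) ^ ((x : ℂ) + Complex.I * y)).re
      = Real.exp (x * Real.log ω - y * (π / 2)) * Real.cos (x * (π / 2) + y * Real.log ω) := by
  have hne : Complex.I * (ω : ℂ) ≠ 0 := mul_ne_zero Complex.I_ne_zero (by exact_mod_cast hω.ne')
  rw [Complex.cpow_def_of_ne_zero hne, Complex.log_I_mul_ofReal hω, Complex.exp_re]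
  congr 2 <;>
  · simp only [Complex.mul_re, Complex.add_re, Complex.add_im, Complex.mul_im, Complex.ofReal_re,
      Complex.ofReal_im, Complex.I_re, Complex.I_im]
    ring

lemma exp_neg_mul_cos_add_add_exp_mul_cos_sub (A B t : ℝ) :
    exp (-B) * cos (A + t) + exp B * cos (A - t)
      = 2 * (cosh B * cos A * cos t + sinh B * sin A * sin t) := by
  rw [cos_add, cos_sub, cosh_eq, sinh_eq]
  ring

lemma cosh_mul_cos_sq_add_sinh_mul_sin_sq {A : ℝ} (hA : cos A ≠ 0) (B : ℝ) :
    (cosh B * cos A) ^ 2 + (sinh B * sin A) ^ 2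
      = (cosh B * cos A) ^ 2 * (1 + (tan A * tanh B) ^ 2) := by
  rw [tan_eq_sin_div_cos, tanh_eq_sinh_div_cosh]
  field_simp

lemma cos_mul_pi_div_two_pos {α : ℝ} (hα : α ∈ Set.Ioo (-1 : ℝ) 1) : 0 < cos (α * (π / 2)) :=
  cos_pos_of_mem_Ioo ⟨by nlinarith [hα.1, pi_pos], by nlinarith [hα.2, pi_pos]⟩

lemma Ctan_mul_cos {α : ℝ} (hα : α ∈ Set.Ioo (-1 : ℝ) 1) (β : ℝ) :
    Ctan α β * cos (α * (π / 2))
      = √((cosh (β * (π / 2)) * cos (α * (π / 2))) ^ 2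
          + (sinh (β * (π / 2)) * sin (α * (π / 2))) ^ 2) := by
  have hcos := cos_mul_pi_div_two_pos hα
  rw [cosh_mul_cos_sq_add_sinh_mul_sin_sq hcos.ne', sqrt_mul (sq_nonneg _),
    sqrt_sq (mul_pos (cosh_pos _) hcos).le, Ctan]
  ring

lemma neg_sqrt_le_mul_cos_add_mul_sin (c d t : ℝ) :
    -√(c ^ 2 + d ^ 2) ≤ c * cos t + d * sin t :=
  neg_sqrt_le_of_sq_le <| by
    nlinarith [sq_nonneg (c * sin t - d * cos t), sin_sq_add_cos_sq t]

lemma re_phi_I_mul {ω : ℝ} (hω : 0 < ω) (α β a b : ℝ) :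
    (phi α β a b (Complex.I * ω)).re
      = 1 + exp (α * Real.log ω) * (a * cos (α * (π / 2)) + b *
          (exp (-(β * (π / 2))) * cos (α * (π / 2) + β * Real.log ω)
            + exp (β * (π / 2)) * cos (α * (π / 2) - β * Real.log ω))) := by
  have hpow : ((Complex.I * ω) ^ (α : ℂ)).re = exp (α * Real.log ω) * cos (α * (π / 2)) := by
    simpa using Complex.re_I_mul_ofReal_cpow hω α 0
  have hpow_add := Complex.re_I_mul_ofReal_cpow hω α β
  have hpow_sub := Complex.re_I_mul_ofReal_cpow hω α (-β)
  rw [Complex.ofReal_neg, mul_neg, ← sub_eq_add_neg, neg_mul, sub_neg_eq_add, neg_mul,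
    ← sub_eq_add_neg] at hpow_sub
  simp only [phi, Complex.add_re, Complex.one_re, Complex.re_ofReal_mul, hpow, hpow_add, hpow_sub]
  rw [sub_eq_add_neg, exp_add, exp_add]
  ring

lemma mul_cos_add_mul_exp_cos_nonneg {α : ℝ} (hα : α ∈ Set.Ioo (-1 : ℝ) 1) (β t : ℝ)
    {a b : ℝ} (hb : 0 ≤ b) (hab : 2 * b * Ctan α β ≤ a) :
    0 ≤ a * cos (α * (π / 2)) + b * (exp (-(β * (π / 2))) * cos (α * (π / 2) + t)
      + exp (β * (π / 2)) * cos (α * (π / 2) - t)) := by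
  have hcos := cos_mul_pi_div_two_pos hα
  have hlow := neg_sqrt_le_mul_cos_add_mul_sin (cosh (β * (π / 2)) * cos (α * (π / 2)))
    (sinh (β * (π / 2)) * sin (α * (π / 2))) t
  rw [← Ctan_mul_cos hα] at hlow
  rw [exp_neg_mul_cos_add_add_exp_mul_cos_sub]
  nlinarith [mul_le_mul_of_nonneg_left hlow hb, mul_le_mul_of_nonneg_right hab hcos.le]

lemma one_le_re_phi_I_mul {α : ℝ} (hα : α ∈ Set.Ioo (-1 : ℝ) 1) (β : ℝ) {a b : ℝ} (hb : 0 ≤ b)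
    (hab : 2 * b * Ctan α β ≤ a) {ω : ℝ} (hω : 0 < ω) :
    1 ≤ (phi α β a b (Complex.I * ω)).re := by
  rw [re_phi_I_mul hω]
  have := mul_nonneg (exp_pos (α * Real.log ω)).le
    (mul_cos_add_mul_exp_cos_nonneg hα β (β * Real.log ω) hb hab)
  linarith

theorem stmt_3_general (α β : ℝ) (hα : α ∈ Set.Ioo (0:ℝ) 1) :
    (∀ a b : ℝ, 0 ≤ a → 0 ≤ b → a ≥ 2 * b * Ctan α β →
      ∀ ω : ℝ, 0 < ω → 1 ≤ (phi α β a b (Complex.I * (ω : ℂ))).re) ∧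
    (∀ a₁ a₂ b₁ b₂ : ℝ, 0 ≤ a₁ → 0 ≤ a₂ → 0 ≤ b₁ → 0 ≤ b₂ →
      a₁ ≥ 2 * b₁ * Ctan α β → a₂ ≥ 2 * b₂ * Ctan α β →
      ∀ ω : ℝ, 0 < ω →
        1 ≤ (phi α β a₂ b₂ (Complex.I * (ω : ℂ))).re ∧
        1 ≤ (phi α β a₁ b₁ (Complex.I * (ω : ℂ))).re) := by
  have hα' : α ∈ Set.Ioo (-1 : ℝ) 1 := ⟨by linarith [hα.1], hα.2⟩
  exact ⟨fun a b _ hb hab ω hω => one_le_re_phi_I_mul hα' β hb hab hω,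
    fun a₁ a₂ b₁ b₂ _ _ hb₁ hb₂ hab₁ hab₂ ω hω =>
      ⟨one_le_re_phi_I_mul hα' β hb₂ hab₂ hω, one_le_re_phi_I_mul hα' β hb₁ hab₁ hω⟩⟩

/-- If `a, b ≥ 0` satisfy `a ≥ 2b·cosh(βπ/2)·√(1 + tan²(απ/2)·tanh²(βπ/2))` then
`Re φ_{a,b}(iω) ≥ 1` for every `ω > 0`; in particular for `P = φ_{a₂,b₂}` and
`Q = φ_{a₁,b₁}` under the restrictions (T3₁), (T3₂). -/
theorem stmt_3 (α β : ℝ) (hα : α ∈ Set.Ioo (0:ℝ) 1) (hβ : 0 < β) :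
    (∀ a b : ℝ, 0 ≤ a → 0 ≤ b → a ≥ 2 * b * Ctan α β →
      ∀ ω : ℝ, 0 < ω → 1 ≤ (phi α β a b (Complex.I * (ω : ℂ))).re) ∧
    (∀ a₁ a₂ b₁ b₂ : ℝ, 0 ≤ a₁ → 0 ≤ a₂ → 0 ≤ b₁ → 0 ≤ b₂ →
      a₁ ≥ 2 * b₁ * Ctan α β → a₂ ≥ 2 * b₂ * Ctan α β →
      ∀ ω : ℝ, 0 < ω →
        1 ≤ (phi α β a₂ b₂ (Complex.I * (ω : ℂ))).re ∧
        1 ≤ (phi α β a₁ b₁ (Complex.I * (ω : ℂ))).re) :=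
  stmt_3_general α β hα
end

section
/- Let α ∈ (0,1), β > 0 and a₁, a₂, b₁, b₂ ≥ 0. If Im P(iω)·Re Q(iω) − Re P(iω)·Im Q(iω) ≥ 0 for every ω > 0, then a₂b₁ = a₁b₂. (Necessity of the thermodynamical restriction (T1).) -/
/-! With `u = s^α` and `v = s^{α+iβ} + s^{α-iβ}`, the quantity `Im P Re Q - Re P Im Q` is
`(a₂ - a₁) Im u + (b₂ - b₁) Im v + (a₂b₁ - a₁b₂) Im (u v̄)`. At `s = iω` the first two terms are
`O(ω^α)`, whereas `Im (u v̄) = 2 ω^{2α} sinh (βπ/2) sin (β log ω)` is of order `ω^{2α}` and changes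
sign. Letting `ω → ∞` along points where `sin (β log ω) = ±1` forces `±(a₂b₁ - a₁b₂) ≥ 0`. -/

open ComplexConjugate Real

theorem im_mul_re_sub_re_mul_im_one_add (a₁ a₂ b₁ b₂ : ℝ) (u v : ℂ) :
    (1 + a₂ * u + b₂ * v).im * (1 + a₁ * u + b₁ * v).re -
        (1 + a₂ * u + b₂ * v).re * (1 + a₁ * u + b₁ * v).im =
      (a₂ - a₁) * u.im + (b₂ - b₁) * v.im + (a₂ * b₁ - a₁ * b₂) * (u * conj v).im := by
  simp only [Complex.add_re, Complex.add_im, Complex.mul_re, Complex.mul_im, Complex.one_re,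
    Complex.one_im, Complex.ofReal_re, Complex.ofReal_im, Complex.conj_re, Complex.conj_im]
  ring

theorem im_cpow_mul_conj_cpow_add_cpow {s : ℂ} (hs : s ≠ 0) (α β : ℝ) :
    (s ^ (α : ℂ) * conj (s ^ ((α : ℂ) + Complex.I * β) + s ^ ((α : ℂ) - Complex.I * β))).im =
      2 * (‖s‖ ^ α) ^ 2 * sinh (β * s.arg) * sin (β * log ‖s‖) := by
  simp only [Complex.cpow_def_of_ne_zero hs, map_add, ← Complex.exp_conj, mul_add,
    ← Complex.exp_add, Complex.add_im, Complex.exp_im, Complex.add_re, Complex.mul_re,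
    Complex.mul_im, Complex.conj_re, Complex.conj_im, Complex.log_re, Complex.log_im,
    Complex.ofReal_re, Complex.ofReal_im, Complex.I_re, Complex.I_im, Complex.sub_re,
    Complex.sub_im, Real.rpow_def_of_pos (norm_pos_iff.mpr hs), sinh_eq]
  ring_nf
  simp only [Real.exp_add, Real.exp_sub, Real.exp_neg, Real.sin_neg, ← Real.exp_nat_mul]
  ring_nf

theorem arg_I_mul_ofReal {ω : ℝ} (hω : 0 < ω) : (Complex.I * ω).arg = π / 2 := by
  rw [mul_comm, Complex.arg_real_mul _ hω, Complex.arg_I]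

theorem norm_I_mul_ofReal {ω : ℝ} (hω : 0 < ω) : ‖Complex.I * ω‖ = ω := by
  simp [abs_of_pos hω]

theorem norm_cpow_add_cpow_le {s : ℂ} (hs : s ≠ 0) (α β : ℝ) :
    ‖s ^ ((α : ℂ) + Complex.I * β) + s ^ ((α : ℂ) - Complex.I * β)‖ ≤
      2 * cosh (β * s.arg) * ‖s‖ ^ α := by
  refine (norm_add_le _ _).trans_eq ?_
  simp only [Complex.norm_cpow_of_ne_zero hs, Complex.add_re, Complex.add_im, Complex.sub_re,
    Complex.sub_im, Complex.mul_re, Complex.mul_im, Complex.ofReal_re, Complex.ofReal_im,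
    Complex.I_re, Complex.I_im, cosh_eq]
  ring_nf
  simp only [Real.exp_neg, inv_inv]
  ring

theorem phi_im_mul_re_sub_re_mul_im_le (α β a₁ a₂ b₁ b₂ : ℝ) {ω : ℝ} (hω : 0 < ω) :
    (phi α β a₂ b₂ (Complex.I * ω)).im * (phi α β a₁ b₁ (Complex.I * ω)).re -
        (phi α β a₂ b₂ (Complex.I * ω)).re * (phi α β a₁ b₁ (Complex.I * ω)).im ≤
      ω ^ α * (|a₂ - a₁| + |b₂ - b₁| * (2 * cosh (β * (π / 2))) +
        2 * sinh (β * (π / 2)) * (a₂ * b₁ - a₁ * b₂) *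
          (ω ^ α * sin (β * log ω))) := by
  have hs : Complex.I * ω ≠ 0 := mul_ne_zero Complex.I_ne_zero (by exact_mod_cast hω.ne')
  rw [phi, phi, im_mul_re_sub_re_mul_im_one_add, im_cpow_mul_conj_cpow_add_cpow hs,
    arg_I_mul_ofReal hω, norm_I_mul_ofReal hω]
  have hu : |((Complex.I * ω) ^ (α : ℂ)).im| ≤ ω ^ α := by
    refine (Complex.abs_im_le_norm _).trans_eq ?_
    rw [Complex.norm_cpow_of_ne_zero hs, norm_I_mul_ofReal hω]
    simp
  have hv := (Complex.abs_im_le_norm _).trans (norm_cpow_add_cpow_le hs α β)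
  rw [arg_I_mul_ofReal hω, norm_I_mul_ofReal hω] at hv
  have hu' := (le_abs_self _).trans ((abs_mul (a₂ - a₁) _).trans_le
    (mul_le_mul_of_nonneg_left hu (abs_nonneg _)))
  have hv' := (le_abs_self _).trans ((abs_mul (b₂ - b₁) _).trans_le
    (mul_le_mul_of_nonneg_left hv (abs_nonneg _)))
  linarith

theorem exists_rpow_ge_and_sin_log_eq {α β : ℝ} (hα : 0 < α) (hβ : 0 < β) (θ M : ℝ) :
    ∃ ω, 0 < ω ∧ M ≤ ω ^ α ∧ sin (β * log ω) = sin θ := by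
  obtain ⟨n, hn⟩ := exists_nat_ge ((M * β / α - θ) / (2 * π))
  refine ⟨Real.exp ((θ + n * (2 * π)) / β), Real.exp_pos _, ?_, ?_⟩
  · rw [← Real.exp_mul]
    have hn' : M * β / α ≤ θ + n * (2 * π) := by
      rw [div_le_iff₀ (by positivity)] at hn; linarith
    have hM : M ≤ (θ + n * (2 * π)) / β * α := by
      rw [div_le_iff₀ hα] at hn'
      rw [div_mul_eq_mul_div, le_div_iff₀ hβ]; linarith
    linarith [Real.add_one_le_exp ((θ + n * (2 * π)) / β * α)]
  · rw [Real.log_exp, mul_div_cancel₀ _ hβ.ne', Real.sin_add_nat_mul_two_pi]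

theorem nonneg_of_forall_exists_ge {K x : ℝ} (h : ∀ M, ∃ t ≥ M, 0 ≤ K + t * x) : 0 ≤ x := by
  by_contra! hx
  obtain ⟨t, ht, hK⟩ := h ((K + 1) / -x)
  have : t * x ≤ (K + 1) / -x * x := mul_le_mul_of_nonpos_right ht hx.le
  rw [div_neg, neg_mul, div_mul_cancel₀ _ hx.ne] at this
  linarith

theorem stmt_5_general (α β a₁ a₂ b₁ b₂ : ℝ) (hα : α ∈ Set.Ioo (0:ℝ) 1) (hβ : 0 < β)
    (h : ∀ ω : ℝ, 0 < ω →
      0 ≤ (phi α β a₂ b₂ (Complex.I * (ω : ℂ))).im * (phi α β a₁ b₁ (Complex.I * (ω : ℂ))).re -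
        (phi α β a₂ b₂ (Complex.I * (ω : ℂ))).re * (phi α β a₁ b₁ (Complex.I * (ω : ℂ))).im) :
    a₂ * b₁ = a₁ * b₂ := by
  have hc (θ : ℝ) : 0 ≤ sinh (β * (π / 2)) * (a₂ * b₁ - a₁ * b₂) * sin θ := by
    refine nonneg_of_forall_exists_ge
      (K := (|a₂ - a₁| + |b₂ - b₁| * (2 * cosh (β * (π / 2)))) / 2) fun M => ?_
    obtain ⟨ω, hω, hM, hsin⟩ := exists_rpow_ge_and_sin_log_eq hα.1 hβ θ M
    refine ⟨ω ^ α, hM, ?_⟩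
    have hbound := nonneg_of_mul_nonneg_right
      ((h ω hω).trans (phi_im_mul_re_sub_re_mul_im_le α β a₁ a₂ b₁ b₂ hω))
      (Real.rpow_pos_of_pos hω α)
    rw [hsin] at hbound
    linarith
  have hup := hc (π / 2)
  have hdown := hc (-(π / 2))
  simp only [Real.sin_neg, Real.sin_pi_div_two, mul_one, mul_neg] at hup hdown
  have hsinh : 0 < sinh (β * (π / 2)) := sinh_pos_iff.mpr (by positivity)
  have hD : sinh (β * (π / 2)) * (a₂ * b₁ - a₁ * b₂) = 0 := by linarith
  linarith [(mul_eq_zero.mp hD).resolve_left hsinh.ne']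

/-- Necessity of the thermodynamical restriction (T1): with `P = φ_{a₂,b₂}`, `Q = φ_{a₁,b₁}`
and `a₁, a₂, b₁, b₂ ≥ 0`, if `Im P(iω)·Re Q(iω) − Re P(iω)·Im Q(iω) ≥ 0` for every `ω > 0`,
then `a₂b₁ = a₁b₂`. -/
theorem stmt_5 (α β a₁ a₂ b₁ b₂ : ℝ) (hα : α ∈ Set.Ioo (0:ℝ) 1) (hβ : 0 < β)
    (ha₁ : 0 ≤ a₁) (ha₂ : 0 ≤ a₂) (hb₁ : 0 ≤ b₁) (hb₂ : 0 ≤ b₂)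
    (h : ∀ ω : ℝ, 0 < ω →
      0 ≤ (phi α β a₂ b₂ (Complex.I * (ω : ℂ))).im * (phi α β a₁ b₁ (Complex.I * (ω : ℂ))).re -
        (phi α β a₂ b₂ (Complex.I * (ω : ℂ))).re * (phi α β a₁ b₁ (Complex.I * (ω : ℂ))).im) :
    a₂ * b₁ = a₁ * b₂ :=
  stmt_5_general α β a₁ a₂ b₁ b₂ hα hβ h
end

section
/- Let α ∈ (0,1) and β > 0. The function φ ↦ cosh(βφ)·√(1 + tan²(αφ)·tanh²(βφ)) is strictly increasing on [0, π/2]; in particular, cosh(βφ)·√(1 + tan²(αφ)·tanh²(βφ)) < cosh(βπ/2)·√(1 + tan²(απ/2)·tanh²(βπ/2)) for every φ ∈ [0, π/2). -/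
/-!
Since `cosh · tanh = sinh`, the function equals `√(cosh² (βφ) + (tan (αφ) · sinh (βφ))²)`.
On `[0, π/2]` the angle `αφ` stays in `[0, π/2)`, so `tan (αφ)` and `sinh (βφ)` are nonnegative
and nondecreasing, while `cosh (βφ)` is positive and strictly increasing.
-/

open Real Set

lemma Real.cosh_mul_sqrt_one_add_mul_tanh_sq (t a : ℝ) :
    cosh a * √(1 + (t * tanh a) ^ 2) = √(cosh a ^ 2 + (t * sinh a) ^ 2) := by
  have hsinh : cosh a * tanh a = sinh a := by
    rw [tanh_eq_sinh_div_cosh, mul_div_cancel₀ _ (cosh_pos a).ne']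
  rw [← hsinh, ← sqrt_sq (cosh_pos a).le, ← sqrt_mul (sq_nonneg _), sqrt_sq (cosh_pos a).le]
  ring_nf

lemma Real.monotoneOn_tan_const_mul {α : ℝ} (hα₀ : 0 ≤ α) (hα₁ : α < 1) :
    MonotoneOn (fun φ => tan (α * φ)) (Icc 0 (π / 2)) := by
  rintro x ⟨hx₀, -⟩ y ⟨-, hy⟩ hxy
  have hαy : α * y < π / 2 := by nlinarith [pi_pos]
  exact strictMonoOn_tan.monotoneOn
    ⟨by nlinarith [pi_pos], by nlinarith⟩ ⟨by nlinarith [pi_pos], hαy⟩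
    (mul_le_mul_of_nonneg_left hxy hα₀)

lemma Real.strictMonoOn_cosh_mul_sqrt_one_add_tan_mul_tanh_sq {α β : ℝ}
    (hα₀ : 0 ≤ α) (hα₁ : α < 1) (hβ : 0 < β) :
    StrictMonoOn (fun φ => cosh (β * φ) * √(1 + (tan (α * φ) * tanh (β * φ)) ^ 2))
      (Icc 0 (π / 2)) := by
  intro x hx y hy hxy
  simp only [cosh_mul_sqrt_one_add_mul_tanh_sq]
  have hβx : 0 ≤ β * x := mul_nonneg hβ.le hx.1
  have hβxy : β * x < β * y := mul_lt_mul_of_pos_left hxy hβ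
  have hcosh : cosh (β * x) ^ 2 < cosh (β * y) ^ 2 :=
    pow_lt_pow_left₀ (cosh_strictMonoOn hβx (mem_Ici.2 (hβx.trans hβxy.le)) hβxy)
      (cosh_pos _).le two_ne_zero
  have htan_nonneg : 0 ≤ tan (α * x) :=
    tan_nonneg_of_nonneg_of_le_pi_div_two (mul_nonneg hα₀ hx.1) (by nlinarith [hx.2])
  have htan_le : tan (α * x) ≤ tan (α * y) := monotoneOn_tan_const_mul hα₀ hα₁ hx hy hxy.le
  have hsinh_nonneg : 0 ≤ sinh (β * x) := sinh_nonneg_iff.2 hβx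
  have hprod : (tan (α * x) * sinh (β * x)) ^ 2 ≤ (tan (α * y) * sinh (β * y)) ^ 2 :=
    pow_le_pow_left₀ (mul_nonneg htan_nonneg hsinh_nonneg)
      (mul_le_mul htan_le (sinh_le_sinh.2 hβxy.le) hsinh_nonneg (htan_nonneg.trans htan_le)) 2
  exact sqrt_lt_sqrt (by positivity) (add_lt_add_of_lt_of_le hcosh hprod)

/-- For `α ∈ (0,1)` and `β > 0`, the function
`φ ↦ cosh(βφ)·√(1 + tan²(αφ)·tanh²(βφ))` is strictly increasing on `[0, π/2]`;
in particular its value at any `φ ∈ [0, π/2)` is strictly smaller than its value at `π/2`. -/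
theorem stmt_11 (α β : ℝ) (hα : α ∈ Set.Ioo (0:ℝ) 1) (hβ : 0 < β) :
    StrictMonoOn
      (fun φ : ℝ => Real.cosh (β * φ) *
        Real.sqrt (1 + (Real.tan (α * φ) * Real.tanh (β * φ)) ^ 2))
      (Set.Icc 0 (Real.pi / 2)) ∧
    ∀ φ ∈ Set.Ico (0:ℝ) (Real.pi / 2),
      Real.cosh (β * φ) * Real.sqrt (1 + (Real.tan (α * φ) * Real.tanh (β * φ)) ^ 2) <
        Real.cosh (β * (Real.pi / 2)) *
          Real.sqrt (1 + (Real.tan (α * (Real.pi / 2)) * Real.tanh (β * (Real.pi / 2))) ^ 2) := by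
  have hmono := strictMonoOn_cosh_mul_sqrt_one_add_tan_mul_tanh_sq hα.1.le hα.2 hβ
  exact ⟨hmono, fun φ hφ =>
    hmono (Ico_subset_Icc_self hφ) (right_mem_Icc.2 (by positivity)) hφ.2⟩
end

section
/- Let α ∈ (0,1), β > 0 and a₁, a₂ > 0, b₁, b₂ > 0 satisfy a₂b₁ = a₁b₂ (restriction (T1)) and a_i ≥ 2b_i·cosh(βπ/2)·√(1 + tan²(απ/2)·tanh²(βπ/2)) for i = 1,2 (restrictions (T3₁), (T3₂)). Then for every complex s ≠ 0 with Re s ≥ 0, Re( P(s) · conj(Q(s)) ) ≥ 1 > 0. (In particular, wherever Q(s) ≠ 0, the real part of Ẽ(s) = P(s)/Q(s) is positive, hence Re M²(s) > 0 for M²(s) = Q(s)/P(s).) -/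
open Real

section Estimates

variable {α β θ : ℝ}

lemma Ctan_sq (α β : ℝ) :
    Ctan α β ^ 2 = cosh (β * (π / 2)) ^ 2 + tan (α * (π / 2)) ^ 2 * sinh (β * (π / 2)) ^ 2 := by
  have hcosh : cosh (β * (π / 2)) ≠ 0 := (cosh_pos _).ne'
  rw [Ctan, mul_pow, sq_sqrt (by positivity), tanh_eq_sinh_div_cosh]
  field_simp

lemma Ctan_nonneg (α β : ℝ) : 0 ≤ Ctan α β := by
  unfold Ctan; positivity

lemma abs_mul_le_mul_pi_div_two (hα₀ : 0 ≤ α) (hθ : |θ| ≤ π / 2) : |α * θ| ≤ α * (π / 2) := by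
  rw [abs_mul, abs_of_nonneg hα₀]
  exact mul_le_mul_of_nonneg_left hθ hα₀

lemma abs_mul_lt_pi_div_two (hα₀ : 0 ≤ α) (hα₁ : α < 1) (hθ : |θ| ≤ π / 2) :
    |α * θ| < π / 2 :=
  (abs_mul_le_mul_pi_div_two hα₀ hθ).trans_lt (by nlinarith [pi_pos])

lemma cos_mul_pos (hα₀ : 0 ≤ α) (hα₁ : α < 1) (hθ : |θ| ≤ π / 2) : 0 < cos (α * θ) := by
  obtain ⟨hl, hr⟩ := abs_lt.mp (abs_mul_lt_pi_div_two hα₀ hα₁ hθ)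
  exact cos_pos_of_mem_Ioo ⟨hl, hr⟩

lemma sin_mul_sq_le (hα₀ : 0 ≤ α) (hα₁ : α < 1) (hθ : |θ| ≤ π / 2) :
    sin (α * θ) ^ 2 ≤ tan (α * (π / 2)) ^ 2 * cos (α * θ) ^ 2 := by
  have hmem : ∀ x, |x| < π / 2 → x ∈ Set.Ioo (-(π / 2)) (π / 2) := fun x hx => abs_lt.mp hx
  have hle := abs_mul_le_mul_pi_div_two hα₀ hθ
  have hlt := abs_mul_lt_pi_div_two hα₀ hα₁ hθ
  have hend : |α * (π / 2)| < π / 2 := by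
    rw [abs_of_nonneg (by positivity)]; nlinarith [pi_pos]
  have hend' : |-(α * (π / 2))| < π / 2 := by rwa [abs_neg]
  have htan : tan (α * θ) ^ 2 ≤ tan (α * (π / 2)) ^ 2 := by
    obtain ⟨hl, hr⟩ := abs_le.mp hle
    refine sq_le_sq' ?_ ?_
    · rw [← tan_neg]
      exact strictMonoOn_tan.monotoneOn (hmem _ hend') (hmem _ hlt) hl
    · exact strictMonoOn_tan.monotoneOn (hmem _ hlt) (hmem _ hend) hr
  have hcos := (cos_mul_pos hα₀ hα₁ hθ).ne'
  calc sin (α * θ) ^ 2 = tan (α * θ) ^ 2 * cos (α * θ) ^ 2 := by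
        rw [tan_eq_sin_div_cos]; field_simp
    _ ≤ tan (α * (π / 2)) ^ 2 * cos (α * θ) ^ 2 := by gcongr

lemma cosh_mul_sq_le (hθ : |θ| ≤ π / 2) : cosh (β * θ) ^ 2 ≤ cosh (β * (π / 2)) ^ 2 := by
  have : cosh (β * θ) ≤ cosh (β * (π / 2)) := by
    rw [cosh_le_cosh, abs_mul, abs_mul, abs_of_pos (by positivity : (0 : ℝ) < π / 2)]
    exact mul_le_mul_of_nonneg_left hθ (abs_nonneg β)
  gcongr

lemma sinh_mul_sq_le (hθ : |θ| ≤ π / 2) : sinh (β * θ) ^ 2 ≤ sinh (β * (π / 2)) ^ 2 := by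
  have := cosh_mul_sq_le (β := β) hθ
  rw [cosh_sq, cosh_sq] at this
  linarith

lemma abs_cosh_cos_add_sinh_sin_le (hα₀ : 0 ≤ α) (hα₁ : α < 1) (hθ : |θ| ≤ π / 2) (x : ℝ) :
    |cosh (β * θ) * cos (α * θ) * cos x + sinh (β * θ) * sin (α * θ) * sin x|
      ≤ Ctan α β * cos (α * θ) := by
  have hcos := cos_mul_pos hα₀ hα₁ hθ
  refine abs_le_of_sq_le_sq ?_ (mul_nonneg (Ctan_nonneg α β) hcos.le)
  have hsin := sin_mul_sq_le hα₀ hα₁ hθ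
  have hcosh := cosh_mul_sq_le (β := β) hθ
  have hsinh := sinh_mul_sq_le (β := β) hθ
  calc (cosh (β * θ) * cos (α * θ) * cos x + sinh (β * θ) * sin (α * θ) * sin x) ^ 2
      ≤ (cosh (β * θ) * cos (α * θ)) ^ 2 + (sinh (β * θ) * sin (α * θ)) ^ 2 := by
        nlinarith [sq_nonneg (cosh (β * θ) * cos (α * θ) * sin x
          - sinh (β * θ) * sin (α * θ) * cos x), sin_sq_add_cos_sq x]
    _ ≤ cosh (β * (π / 2)) ^ 2 * cos (α * θ) ^ 2
          + sinh (β * (π / 2)) ^ 2 * (tan (α * (π / 2)) ^ 2 * cos (α * θ) ^ 2) := by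
        rw [mul_pow, mul_pow]; gcongr
    _ = (Ctan α β * cos (α * θ)) ^ 2 := by rw [mul_pow, Ctan_sq]; ring

end Estimates

lemma Complex.re_cpow_of_ne_zero {s : ℂ} (hs : s ≠ 0) (w : ℂ) :
    (s ^ w).re = Real.exp (w.re * Real.log ‖s‖ - w.im * s.arg)
      * Real.cos (w.re * s.arg + w.im * Real.log ‖s‖) := by
  rw [Complex.cpow_def_of_ne_zero hs, Complex.exp_re]
  simp only [Complex.mul_re, Complex.mul_im, Complex.log_re, Complex.log_im]
  ring_nf

noncomputable def psi (α β a b : ℝ) (s : ℂ) : ℂ :=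
  (a : ℂ) * s ^ (α : ℂ) +
    (b : ℂ) * (s ^ ((α : ℂ) + Complex.I * (β : ℂ)) + s ^ ((α : ℂ) - Complex.I * (β : ℂ)))

lemma phi_eq_one_add_psi (α β a b : ℝ) (s : ℂ) : phi α β a b s = 1 + psi α β a b s := by
  rw [phi, psi]; ring

lemma ofReal_mul_psi_comm {α β a₁ a₂ b₁ b₂ : ℝ} (h : a₂ * b₁ = a₁ * b₂) (s : ℂ) :
    (a₁ : ℂ) * psi α β a₂ b₂ s = a₂ * psi α β a₁ b₁ s := by
  have h' : (a₂ : ℂ) * b₁ = a₁ * b₂ := by exact_mod_cast h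
  simp only [psi]
  linear_combination
    (-(s ^ ((α : ℂ) + Complex.I * β) + s ^ ((α : ℂ) - Complex.I * β))) * h'

lemma re_psi {s : ℂ} (hs : s ≠ 0) (α β a b : ℝ) :
    (psi α β a b s).re = rexp (α * log ‖s‖) * (a * cos (α * s.arg)
      + 2 * b * (cosh (β * s.arg) * cos (α * s.arg) * cos (β * log ‖s‖)
        + sinh (β * s.arg) * sin (α * s.arg) * sin (β * log ‖s‖))) := by
  simp only [psi, Complex.add_re, Complex.re_cpow_of_ne_zero hs,
    Complex.add_im, Complex.sub_re, Complex.sub_im, Complex.ofReal_re, Complex.ofReal_im,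
    Complex.mul_re, Complex.mul_im, Complex.I_re, Complex.I_im]
  rw [cosh_eq, sinh_eq]
  simp only [zero_mul, one_mul, sub_zero, zero_sub, mul_zero, neg_mul, sub_neg_eq_add, exp_sub,
    exp_add, exp_neg, cos_add, cos_zero, sin_zero, cos_neg, sin_neg]
  field_simp
  ring_nf

lemma re_psi_nonneg {α β a b : ℝ} (hα₀ : 0 ≤ α) (hα₁ : α < 1) (hb : 0 ≤ b)
    (hT3 : a ≥ 2 * b * Ctan α β) {s : ℂ} (hs : s ≠ 0) (hre : 0 ≤ s.re) :
    0 ≤ (psi α β a b s).re := by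
  have hθ : |s.arg| ≤ π / 2 := Complex.abs_arg_le_pi_div_two_iff.mpr hre
  have hcos := cos_mul_pos hα₀ hα₁ hθ
  have hosc := (abs_le.mp (abs_cosh_cos_add_sinh_sin_le (β := β) hα₀ hα₁ hθ (β * log ‖s‖))).1
  rw [re_psi hs]
  refine mul_nonneg (exp_nonneg _) ?_
  nlinarith [mul_le_mul_of_nonneg_left hT3 hcos.le, mul_le_mul_of_nonneg_left hosc hb]

lemma Complex.re_mul_conj_nonneg_of_mul_eq_mul {z w : ℂ} {a b : ℝ} (ha : 0 < a) (hb : 0 ≤ b)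
    (h : (a : ℂ) * w = b * z) : 0 ≤ (w * (starRingEnd ℂ) z).re := by
  have hre : a * (w * (starRingEnd ℂ) z).re = b * Complex.normSq z := by
    rw [← Complex.re_ofReal_mul, ← mul_assoc, h, mul_assoc, Complex.mul_conj,
      ← Complex.ofReal_mul, Complex.ofReal_re]
  refine (mul_nonneg_iff_of_pos_left ha).mp ?_
  rw [hre]
  exact mul_nonneg hb (Complex.normSq_nonneg z)

lemma Complex.one_le_re_one_add_mul_conj_one_add {z w : ℂ} (hz : 0 ≤ z.re) (hw : 0 ≤ w.re)
    (hwz : 0 ≤ (w * (starRingEnd ℂ) z).re) : 1 ≤ ((1 + w) * (starRingEnd ℂ) (1 + z)).re := by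
  simp only [map_add, map_one, add_mul, mul_add, one_mul, mul_one, Complex.add_re,
    Complex.one_re, Complex.conj_re]
  linarith

lemma Complex.re_div_pos_of_re_mul_conj_pos {z w : ℂ} (h : 0 < (z * (starRingEnd ℂ) w).re)
    (hw : w ≠ 0) : 0 < (z / w).re := by
  rw [div_eq_mul_inv, Complex.inv_def, ← mul_assoc, mul_comm _ (((Complex.normSq w)⁻¹ : ℝ) : ℂ),
    Complex.re_ofReal_mul]
  have := Complex.normSq_pos.mpr hw
  positivity

theorem stmt_14_general (α β a₁ a₂ b₁ b₂ : ℝ) (hα : α ∈ Set.Ioo (0:ℝ) 1)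
    (ha₁ : 0 < a₁) (ha₂ : 0 < a₂) (hb₁ : 0 < b₁) (hb₂ : 0 < b₂)
    (hT1 : a₂ * b₁ = a₁ * b₂)
    (hT3₁ : a₁ ≥ 2 * b₁ * Ctan α β) (hT3₂ : a₂ ≥ 2 * b₂ * Ctan α β) :
    ∀ s : ℂ, s ≠ 0 → 0 ≤ s.re →
      1 ≤ (phi α β a₂ b₂ s * (starRingEnd ℂ) (phi α β a₁ b₁ s)).re ∧
      (phi α β a₁ b₁ s ≠ 0 → 0 < (phi α β a₂ b₂ s / phi α β a₁ b₁ s).re) ∧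
      (phi α β a₂ b₂ s ≠ 0 → 0 < (phi α β a₁ b₁ s / phi α β a₂ b₂ s).re) := by
  intro s hs hre
  have hψ₁ := re_psi_nonneg hα.1.le hα.2 hb₁.le hT3₁ hs hre
  have hψ₂ := re_psi_nonneg hα.1.le hα.2 hb₂.le hT3₂ hs hre
  have hcross := Complex.re_mul_conj_nonneg_of_mul_eq_mul ha₁ ha₂.le
    (ofReal_mul_psi_comm (α := α) (β := β) hT1 s)
  have hPQ : 1 ≤ (phi α β a₂ b₂ s * (starRingEnd ℂ) (phi α β a₁ b₁ s)).re := by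
    simpa only [phi_eq_one_add_psi] using
      Complex.one_le_re_one_add_mul_conj_one_add hψ₁ hψ₂ hcross
  have hQP : 1 ≤ (phi α β a₁ b₁ s * (starRingEnd ℂ) (phi α β a₂ b₂ s)).re := by
    rwa [← Complex.conj_re, map_mul, Complex.conj_conj, mul_comm]
  exact ⟨hPQ, Complex.re_div_pos_of_re_mul_conj_pos (one_pos.trans_le hPQ),
    Complex.re_div_pos_of_re_mul_conj_pos (one_pos.trans_le hQP)⟩

/-- Under (T1) and (T3₁), (T3₂) with `a₁, a₂, b₁, b₂ > 0`: for every `s ≠ 0` with `Re s ≥ 0`,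
`Re (P(s)·conj(Q(s))) ≥ 1 > 0`; in particular, wherever `Q(s) ≠ 0`, `Re (P/Q)(s) > 0`,
hence `Re M²(s) > 0` for `M² = Q/P` (wherever `P(s) ≠ 0`). -/
theorem stmt_14 (α β a₁ a₂ b₁ b₂ : ℝ) (hα : α ∈ Set.Ioo (0:ℝ) 1) (hβ : 0 < β)
    (ha₁ : 0 < a₁) (ha₂ : 0 < a₂) (hb₁ : 0 < b₁) (hb₂ : 0 < b₂)
    (hT1 : a₂ * b₁ = a₁ * b₂)
    (hT3₁ : a₁ ≥ 2 * b₁ * Ctan α β) (hT3₂ : a₂ ≥ 2 * b₂ * Ctan α β) :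
    ∀ s : ℂ, s ≠ 0 → 0 ≤ s.re →
      1 ≤ (phi α β a₂ b₂ s * (starRingEnd ℂ) (phi α β a₁ b₁ s)).re ∧
      (phi α β a₁ b₁ s ≠ 0 → 0 < (phi α β a₂ b₂ s / phi α β a₁ b₁ s).re) ∧
      (phi α β a₂ b₂ s ≠ 0 → 0 < (phi α β a₁ b₁ s / phi α β a₂ b₂ s).re) :=
  stmt_14_general α β a₁ a₂ b₁ b₂ hα ha₁ ha₂ hb₁ hb₂ hT1 hT3₁ hT3₂
end
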